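/- arXiv:2506.07537 — 3 statements merged into one kernel-verified Lean document; each statement's English description precedes it below -/
import Mathlib

section
/- Let Ω ⊂ ℝⁿ be a bounded domain, ε > 0, γ > 0, and α, β ∈ (0,1) with α + β = 1. If u₁ and u₂ are bounded Borel functions on Ω_ε = Ω ∪ Γ_ε each satisfying the dynamic programming principle u_i(x) = (1−γε²)·( (α/2)(sup_{B_ε(x)} u_i + inf_{B_ε(x)} u_i) + β·⨍_{B_ε(x)} u_i ) for all x ∈ Ω, with boundary data u₁ = F₁ and u₂ = F₂ on Γ_ε, then sup_Ω |u₁ − u₂| ≤ sup_{Γ_ε} |F₁ − F₂|. -/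
open MeasureTheory Metric Set

private lemma seg_frontier {E : Type*} [NormedAddCommGroup E] [NormedSpace ℝ E]
    {x y : E} {Ω : Set E} (hΩ : IsOpen Ω) (hx : x ∈ Ω) (hy : y ∉ Ω) :
    ∃ z ∈ frontier Ω, z ∈ segment ℝ x y := by
  by_cases hyc : y ∈ closure Ω
  · exact ⟨y, ⟨hyc, by rwa [hΩ.interior_eq]⟩, right_mem_segment _ _ _⟩
  · by_contra h
    push_neg at h
    have hsub : segment ℝ x y ⊆ interior Ω ∪ (closure Ω)ᶜ := by
      intro z hz
      by_cases h1 : z ∈ closure Ω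
      · left
        by_contra h2
        exact h z ⟨h1, h2⟩ hz
      · right; exact h1
    obtain ⟨z, hz⟩ := (convex_segment x y).isPreconnected _ _ isOpen_interior
      isClosed_closure.isOpen_compl hsub
      ⟨x, left_mem_segment _ _ _, by rwa [hΩ.interior_eq]⟩
      ⟨y, right_mem_segment _ _ _, hyc⟩
    exact hz.2.2 (subset_closure (interior_subset hz.2.1))

private lemma dpp_one_sided {n : ℕ}
    (Ω : Set (EuclideanSpace ℝ (Fin n))) (hΩo : IsOpen Ω)
    (hΩne : Ω.Nonempty)
    (ε γ α β : ℝ) (hε : 0 < ε) (hγ : 0 < γ)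
    (hα : α ∈ Set.Ioo (0:ℝ) 1) (hβ : β ∈ Set.Ioo (0:ℝ) 1)
    (hαβ : α + β = 1) (hγε : γ * ε ^ 2 < 1)
    (Γε : Set (EuclideanSpace ℝ (Fin n)))
    (hΓ : Γε = {x | x ∉ Ω ∧ Metric.infDist x (frontier Ω) ≤ ε})
    (u₁ u₂ F₁ F₂ : EuclideanSpace ℝ (Fin n) → ℝ)
    (hm₁ : Measurable u₁) (hm₂ : Measurable u₂)
    (hb₁ : ∃ M, ∀ x ∈ Ω ∪ Γε, |u₁ x| ≤ M)
    (hb₂ : ∃ M, ∀ x ∈ Ω ∪ Γε, |u₂ x| ≤ M)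
    (hdpp₁ : ∀ x ∈ Ω, u₁ x = (1 - γ * ε ^ 2) *
      ((α / 2) * (sSup (u₁ '' ball x ε) + sInf (u₁ '' ball x ε)) +
        β * ⨍ y in ball x ε, u₁ y))
    (hdpp₂ : ∀ x ∈ Ω, u₂ x = (1 - γ * ε ^ 2) *
      ((α / 2) * (sSup (u₂ '' ball x ε) + sInf (u₂ '' ball x ε)) +
        β * ⨍ y in ball x ε, u₂ y))
    (hbd₁ : ∀ x ∈ Γε, u₁ x = F₁ x) (hbd₂ : ∀ x ∈ Γε, u₂ x = F₂ x) :
    ∀ x ∈ Ω, u₁ x - u₂ x ≤ sSup ((fun y => |F₁ y - F₂ y|) '' Γε) := by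
  obtain ⟨M₁, hM₁⟩ := hb₁
  obtain ⟨M₂, hM₂⟩ := hb₂
  set c := 1 - γ * ε ^ 2 with hc
  have hc0 : 0 < c := by simp only [hc]; linarith
  have hc1 : c < 1 := by
    have := mul_pos hγ (pow_pos hε 2); simp only [hc]; linarith
  set D := Ω ∪ Γε with hD
  set w := fun x => u₁ x - u₂ x with hw
  have hDne : D.Nonempty := hΩne.mono subset_union_left
  have hwB : BddAbove (w '' D) := by
    refine ⟨M₁ + M₂, ?_⟩
    rintro v ⟨y, hy, rfl⟩
    have := hM₁ y hy; have := hM₂ y hy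
    simp only [hw]
    cases abs_le.1 (hM₁ y hy); cases abs_le.1 (hM₂ y hy); linarith
  set K := sSup (w '' D) with hK
  set S := sSup ((fun y => |F₁ y - F₂ y|) '' Γε) with hS
  have hSB : BddAbove ((fun y => |F₁ y - F₂ y|) '' Γε) := by
    refine ⟨M₁ + M₂, ?_⟩
    rintro v ⟨y, hy, rfl⟩
    show |F₁ y - F₂ y| ≤ M₁ + M₂
    rw [← hbd₁ y hy, ← hbd₂ y hy]
    have h1 := abs_le.1 (hM₁ y (Or.inr hy))
    have h2 := abs_le.1 (hM₂ y (Or.inr hy))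
    rw [abs_le]; constructor <;> linarith
  have hS0 : 0 ≤ S := by
    rcases Set.eq_empty_or_nonempty Γε with hΓe | ⟨y, hy⟩
    · simp [hS, hΓe, Real.sSup_empty]
    · exact le_trans (abs_nonneg _) (le_csSup hSB ⟨y, hy, rfl⟩)
  -- ball inclusion
  have hball : ∀ x ∈ Ω, ball x ε ⊆ D := by
    intro x hx y hy
    by_cases hyΩ : y ∈ Ω
    · exact Or.inl hyΩ
    · right
      rw [hΓ]
      refine ⟨hyΩ, ?_⟩
      obtain ⟨z, hzf, hzs⟩ := seg_frontier hΩo hx hyΩ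
      have hdz := dist_add_dist_of_mem_segment hzs
      have hxy : dist x y < ε := mem_ball'.1 hy
      have : dist y z ≤ ε := by
        rw [dist_comm y z]; linarith [dist_nonneg (x := x) (y := z)]
      exact le_trans (infDist_le_dist_of_mem hzf) this
  -- key contraction step
  have hkey : ∀ x ∈ Ω, w x ≤ c * K := by
    intro x hx
    set B := ball x ε with hB
    have hBsub := hball x hx
    have hBne : B.Nonempty := nonempty_ball.2 hε
    have hB1a : BddAbove (u₁ '' B) :=
      ⟨M₁, by rintro v ⟨y, hy, rfl⟩; exact (abs_le.1 (hM₁ y (hBsub hy))).2⟩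
    have hB1b : BddBelow (u₁ '' B) :=
      ⟨-M₁, by rintro v ⟨y, hy, rfl⟩; exact (abs_le.1 (hM₁ y (hBsub hy))).1⟩
    have hB2a : BddAbove (u₂ '' B) :=
      ⟨M₂, by rintro v ⟨y, hy, rfl⟩; exact (abs_le.1 (hM₂ y (hBsub hy))).2⟩
    have hB2b : BddBelow (u₂ '' B) :=
      ⟨-M₂, by rintro v ⟨y, hy, rfl⟩; exact (abs_le.1 (hM₂ y (hBsub hy))).1⟩
    have hwK : ∀ y ∈ B, w y ≤ K := fun y hy => le_csSup hwB ⟨y, hBsub hy, rfl⟩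
    -- sup bound
    have hsup : sSup (u₁ '' B) ≤ K + sSup (u₂ '' B) := by
      refine csSup_le (hBne.image _) ?_
      rintro v ⟨y, hy, rfl⟩
      have h1 : u₁ y = w y + u₂ y := by simp [hw]
      have h2 : u₂ y ≤ sSup (u₂ '' B) := le_csSup hB2a ⟨y, hy, rfl⟩
      linarith [hwK y hy]
    -- inf bound
    have hinf : sInf (u₁ '' B) ≤ K + sInf (u₂ '' B) := by
      have : sInf (u₁ '' B) - K ≤ sInf (u₂ '' B) := by
        refine le_csInf (hBne.image _) ?_
        rintro v ⟨y, hy, rfl⟩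
        have h2 : sInf (u₁ '' B) ≤ u₁ y := csInf_le hB1b ⟨y, hy, rfl⟩
        have h1 : u₁ y = w y + u₂ y := by simp [hw]
        linarith [hwK y hy]
      linarith
    -- average bound
    have hfin : volume B ≠ ⊤ := measure_ball_lt_top.ne
    have hpos : 0 < (volume B).toReal :=
      ENNReal.toReal_pos (measure_ball_pos volume x hε).ne' hfin
    have hi₁ : IntegrableOn u₁ B volume := by
      refine Measure.integrableOn_of_bounded (M := M₁) hfin hm₁.aestronglyMeasurable ?_
      filter_upwards [ae_restrict_mem measurableSet_ball] with y hy
      simpa [Real.norm_eq_abs] using hM₁ y (hBsub hy)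
    have hi₂ : IntegrableOn u₂ B volume := by
      refine Measure.integrableOn_of_bounded (M := M₂) hfin hm₂.aestronglyMeasurable ?_
      filter_upwards [ae_restrict_mem measurableSet_ball] with y hy
      simpa [Real.norm_eq_abs] using hM₂ y (hBsub hy)
    have havg : (⨍ y in B, u₁ y) ≤ K + ⨍ y in B, u₂ y := by
      have hint : ∫ y in B, u₁ y ≤ ∫ y in B, (K + u₂ y) := by
        refine setIntegral_mono_on hi₁ (((integrableOn_const_iff (C := K)).2 (Or.inr measure_ball_lt_top)).add hi₂)
          measurableSet_ball ?_
        intro y hy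
        have h1 : u₁ y = w y + u₂ y := by simp [hw]
        linarith [hwK y hy]
      have hconst : ∫ y in B, (K + u₂ y) = (volume B).toReal * K + ∫ y in B, u₂ y := by
        rw [integral_add ((integrableOn_const_iff (C := K)).2 (Or.inr measure_ball_lt_top)) hi₂]
        simp [setIntegral_const, smul_eq_mul, measureReal_def, hB]
      rw [setAverage_eq, setAverage_eq, smul_eq_mul, smul_eq_mul, measureReal_def]
      rw [hconst] at hint
      rw [← sub_nonneg]
      have h3 : (volume B).toReal⁻¹ * ((volume B).toReal * K + ∫ y in B, u₂ y)
          = K + (volume B).toReal⁻¹ * ∫ y in B, u₂ y := by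
        field_simp
      nlinarith [inv_pos.2 hpos, mul_le_mul_of_nonneg_left hint (inv_pos.2 hpos).le]
    -- combine
    have e1 := hdpp₁ x hx
    have e2 := hdpp₂ x hx
    have hα0 := hα.1
    have hβ0 := hβ.1
    have : w x = c * ((α / 2) * (sSup (u₁ '' B) + sInf (u₁ '' B)) + β * ⨍ y in B, u₁ y)
        - c * ((α / 2) * (sSup (u₂ '' B) + sInf (u₂ '' B)) + β * ⨍ y in B, u₂ y) := by
      simp only [hw]; rw [e1, e2]
    rw [this]
    have hcK : c * ((α / 2) * ((K + sSup (u₂ '' B)) + (K + sInf (u₂ '' B)))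
        + β * (K + ⨍ y in B, u₂ y))
        - c * ((α / 2) * (sSup (u₂ '' B) + sInf (u₂ '' B)) + β * ⨍ y in B, u₂ y) = c * K := by
      have hβ' : β = 1 - α := by linarith
      rw [hβ']; ring
    rw [← hcK]
    nlinarith [mul_le_mul_of_nonneg_left hsup (by positivity : (0:ℝ) ≤ c * (α/2)),
      mul_le_mul_of_nonneg_left hinf (by positivity : (0:ℝ) ≤ c * (α/2)),
      mul_le_mul_of_nonneg_left havg (by positivity : (0:ℝ) ≤ c * β)]
  -- boundary bound
  have hbdr : ∀ x ∈ Γε, w x ≤ S := by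
    intro x hx
    have : w x ≤ |F₁ x - F₂ x| := by
      simp only [hw, hbd₁ x hx, hbd₂ x hx]; exact le_abs_self _
    exact this.trans (le_csSup hSB ⟨x, hx, rfl⟩)
  -- K ≤ S
  have hKS : K ≤ S := by
    have hKmax : K ≤ max (c * K) S := by
      refine csSup_le (hDne.image _) ?_
      rintro v ⟨y, hy, rfl⟩
      rcases hy with hy | hy
      · exact le_max_of_le_left (hkey y hy)
      · exact le_max_of_le_right (hbdr y hy)
    rcases le_max_iff.1 hKmax with h | h
    · nlinarith
    · exact h
  intro x hx
  exact le_trans (le_csSup hwB ⟨x, Or.inl hx, rfl⟩) hKS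

theorem dpp_comparison_lemma {n : ℕ}
    (Ω : Set (EuclideanSpace ℝ (Fin n))) (hΩo : IsOpen Ω)
    (hΩb : Bornology.IsBounded Ω) (hΩne : Ω.Nonempty)
    (ε γ α β : ℝ) (hε : 0 < ε) (hγ : 0 < γ)
    (hα : α ∈ Set.Ioo (0:ℝ) 1) (hβ : β ∈ Set.Ioo (0:ℝ) 1)
    (hαβ : α + β = 1) (hγε : γ * ε ^ 2 < 1)
    (Γε : Set (EuclideanSpace ℝ (Fin n)))
    (hΓ : Γε = {x | x ∉ Ω ∧ Metric.infDist x (frontier Ω) ≤ ε})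
    (u₁ u₂ F₁ F₂ : EuclideanSpace ℝ (Fin n) → ℝ)
    (hm₁ : Measurable u₁) (hm₂ : Measurable u₂)
    (hb₁ : ∃ M, ∀ x ∈ Ω ∪ Γε, |u₁ x| ≤ M)
    (hb₂ : ∃ M, ∀ x ∈ Ω ∪ Γε, |u₂ x| ≤ M)
    (hdpp₁ : ∀ x ∈ Ω, u₁ x = (1 - γ * ε ^ 2) *
      ((α / 2) * (sSup (u₁ '' ball x ε) + sInf (u₁ '' ball x ε)) +
        β * ⨍ y in ball x ε, u₁ y))
    (hdpp₂ : ∀ x ∈ Ω, u₂ x = (1 - γ * ε ^ 2) *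
      ((α / 2) * (sSup (u₂ '' ball x ε) + sInf (u₂ '' ball x ε)) +
        β * ⨍ y in ball x ε, u₂ y))
    (hbd₁ : ∀ x ∈ Γε, u₁ x = F₁ x) (hbd₂ : ∀ x ∈ Γε, u₂ x = F₂ x) :
    ∀ x ∈ Ω, |u₁ x - u₂ x| ≤ sSup ((fun y => |F₁ y - F₂ y|) '' Γε) := by
  intro x hx
  have h1 := dpp_one_sided Ω hΩo hΩne ε γ α β hε hγ hα hβ hαβ hγε Γε hΓ
    u₁ u₂ F₁ F₂ hm₁ hm₂ hb₁ hb₂ hdpp₁ hdpp₂ hbd₁ hbd₂ x hx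
  have h2 := dpp_one_sided Ω hΩo hΩne ε γ α β hε hγ hα hβ hαβ hγε Γε hΓ
    u₂ u₁ F₂ F₁ hm₂ hm₁ hb₂ hb₁ hdpp₂ hdpp₁ hbd₂ hbd₁ x hx
  have himg : (fun y => |F₂ y - F₁ y|) '' Γε = (fun y => |F₁ y - F₂ y|) '' Γε := by
    simp only [abs_sub_comm]
  rw [himg] at h2
  rw [abs_sub_le_iff]
  exact ⟨h1, h2⟩
end

section
/- Suppose u₁ and u₂ satisfy the DPP with boundary data F₁ ≤ F₂ on Γ_ε respectively (γ > 0, γε² < 1). Then u₁ ≤ u₂ on all of Ω_ε. -/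
open MeasureTheory Metric Set

theorem dpp_comparison_principle {n : ℕ}
    (Ω : Set (EuclideanSpace ℝ (Fin n))) (hΩo : IsOpen Ω)
    (hΩb : Bornology.IsBounded Ω) (hΩne : Ω.Nonempty)
    (ε γ α β : ℝ) (hε : 0 < ε) (hγ : 0 < γ)
    (hα : α ∈ Set.Ioo (0:ℝ) 1) (hβ : β ∈ Set.Ioo (0:ℝ) 1)
    (hαβ : α + β = 1) (hγε : γ * ε ^ 2 < 1)
    (Γε : Set (EuclideanSpace ℝ (Fin n)))
    (hΓ : Γε = {x | x ∉ Ω ∧ Metric.infDist x (frontier Ω) ≤ ε})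
    (u₁ u₂ F₁ F₂ : EuclideanSpace ℝ (Fin n) → ℝ)
    (hm₁ : Measurable u₁) (hm₂ : Measurable u₂)
    (hb₁ : ∃ M, ∀ x ∈ Ω ∪ Γε, |u₁ x| ≤ M)
    (hb₂ : ∃ M, ∀ x ∈ Ω ∪ Γε, |u₂ x| ≤ M)
    (hdpp₁ : ∀ x ∈ Ω, u₁ x = (1 - γ * ε ^ 2) *
      ((α / 2) * (sSup (u₁ '' ball x ε) + sInf (u₁ '' ball x ε)) +
        β * ⨍ y in ball x ε, u₁ y))
    (hdpp₂ : ∀ x ∈ Ω, u₂ x = (1 - γ * ε ^ 2) *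
      ((α / 2) * (sSup (u₂ '' ball x ε) + sInf (u₂ '' ball x ε)) +
        β * ⨍ y in ball x ε, u₂ y))
    (hbd₁ : ∀ x ∈ Γε, u₁ x = F₁ x) (hbd₂ : ∀ x ∈ Γε, u₂ x = F₂ x)
    (hF : ∀ x ∈ Γε, F₁ x ≤ F₂ x) :
    ∀ x ∈ Ω ∪ Γε, u₁ x ≤ u₂ x := by
  obtain ⟨M₁, hM₁⟩ := hb₁
  obtain ⟨M₂, hM₂⟩ := hb₂
  have hγε2 : 0 < γ * ε ^ 2 := by positivity
  have hc : 0 < 1 - γ * ε ^ 2 := by linarith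
  -- balls around interior points stay in Ω ∪ Γε
  have hball : ∀ x ∈ Ω, ball x ε ⊆ Ω ∪ Γε := by
    intro x hx y hy
    by_cases hyΩ : y ∈ Ω
    · exact Or.inl hyΩ
    · refine Or.inr ?_
      rw [hΓ]
      refine ⟨hyΩ, ?_⟩
      have hyc : y ∈ Ωᶜ := hyΩ
      have hne : Ωᶜ ≠ univ := by
        intro h
        obtain ⟨z, hz⟩ := hΩne
        have : z ∈ Ωᶜ := h ▸ mem_univ z
        exact this hz
      obtain ⟨z, hz, hzd⟩ := exists_mem_frontier_infDist_compl_eq_dist hyc hne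
      rw [frontier_compl] at hz
      rw [compl_compl] at hzd
      have h1 : Metric.infDist y (frontier Ω) ≤ dist y z :=
        Metric.infDist_le_dist_of_mem hz
      have h2 : Metric.infDist y Ω ≤ dist y x := Metric.infDist_le_dist_of_mem hx
      have h3 : dist y x < ε := by
        rw [dist_comm]; exact mem_ball'.mp hy
      linarith [hzd ▸ h1]
  -- the supremum of the difference
  set d : EuclideanSpace ℝ (Fin n) → ℝ := fun x => u₁ x - u₂ x with hd
  have hne : (d '' (Ω ∪ Γε)).Nonempty := by
    obtain ⟨z, hz⟩ := hΩne
    exact ⟨d z, z, Or.inl hz, rfl⟩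
  have hbddd : BddAbove (d '' (Ω ∪ Γε)) := by
    refine ⟨M₁ + M₂, ?_⟩
    rintro a ⟨x, hx, rfl⟩
    have h1 := abs_le.mp (hM₁ x hx)
    have h2 := abs_le.mp (hM₂ x hx)
    show u₁ x - u₂ x ≤ M₁ + M₂
    linarith [h1.1, h1.2, h2.1, h2.2]
  set S : ℝ := sSup (d '' (Ω ∪ Γε)) with hS
  have hS_le : ∀ x ∈ Ω ∪ Γε, u₁ x - u₂ x ≤ S := by
    intro x hx
    exact le_csSup hbddd ⟨x, hx, rfl⟩
  -- key estimate on Ω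
  have hkey : ∀ x ∈ Ω, u₁ x - u₂ x ≤ (1 - γ * ε ^ 2) * S := by
    intro x hx
    have hBsub : ball x ε ⊆ Ω ∪ Γε := hball x hx
    have hBne : (ball x ε).Nonempty := ⟨x, mem_ball_self hε⟩
    have hne1 : (u₁ '' ball x ε).Nonempty := hBne.image _
    have hne2 : (u₂ '' ball x ε).Nonempty := hBne.image _
    have hbdd1 : BddAbove (u₁ '' ball x ε) := by
      refine ⟨M₁, ?_⟩; rintro a ⟨y, hy, rfl⟩
      exact (abs_le.mp (hM₁ y (hBsub hy))).2
    have hbdd2 : BddAbove (u₂ '' ball x ε) := by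
      refine ⟨M₂, ?_⟩; rintro a ⟨y, hy, rfl⟩
      exact (abs_le.mp (hM₂ y (hBsub hy))).2
    have hbdb1 : BddBelow (u₁ '' ball x ε) := by
      refine ⟨-M₁, ?_⟩; rintro a ⟨y, hy, rfl⟩
      exact (abs_le.mp (hM₁ y (hBsub hy))).1
    have hbdb2 : BddBelow (u₂ '' ball x ε) := by
      refine ⟨-M₂, ?_⟩; rintro a ⟨y, hy, rfl⟩
      exact (abs_le.mp (hM₂ y (hBsub hy))).1
    -- sup estimate
    have hsup : sSup (u₁ '' ball x ε) ≤ sSup (u₂ '' ball x ε) + S := by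
      refine csSup_le hne1 ?_
      rintro a ⟨y, hy, rfl⟩
      have h1 : u₁ y - u₂ y ≤ S := hS_le y (hBsub hy)
      have h2 : u₂ y ≤ sSup (u₂ '' ball x ε) := le_csSup hbdd2 ⟨y, hy, rfl⟩
      linarith
    -- inf estimate
    have hinf : sInf (u₁ '' ball x ε) ≤ sInf (u₂ '' ball x ε) + S := by
      have : sInf (u₁ '' ball x ε) - S ≤ sInf (u₂ '' ball x ε) := by
        refine le_csInf hne2 ?_
        rintro a ⟨y, hy, rfl⟩
        have h1 : u₁ y - u₂ y ≤ S := hS_le y (hBsub hy)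
        have h2 : sInf (u₁ '' ball x ε) ≤ u₁ y := csInf_le hbdb1 ⟨y, hy, rfl⟩
        linarith
      linarith
    -- average estimate
    have hμpos : 0 < (volume (ball x ε)).toReal := by
      refine ENNReal.toReal_pos (measure_ball_pos volume x hε).ne' measure_ball_lt_top.ne
    have hint1 : IntegrableOn u₁ (ball x ε) := by
      have hcst : IntegrableOn (fun _ : EuclideanSpace ℝ (Fin n) => M₁) (ball x ε) volume :=
        integrableOn_const measure_ball_lt_top.ne
      refine Integrable.mono' hcst hm₁.aestronglyMeasurable.restrict ?_
      refine (ae_restrict_iff' measurableSet_ball).mpr (ae_of_all _ fun y hy => ?_)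
      exact hM₁ y (hBsub hy)
    have hint2 : IntegrableOn u₂ (ball x ε) := by
      have hcst : IntegrableOn (fun _ : EuclideanSpace ℝ (Fin n) => M₂) (ball x ε) volume :=
        integrableOn_const measure_ball_lt_top.ne
      refine Integrable.mono' hcst hm₂.aestronglyMeasurable.restrict ?_
      refine (ae_restrict_iff' measurableSet_ball).mpr (ae_of_all _ fun y hy => ?_)
      exact hM₂ y (hBsub hy)
    have havg : (⨍ y in ball x ε, u₁ y) ≤ (⨍ y in ball x ε, u₂ y) + S := by
      have hcstS : IntegrableOn (fun _ : EuclideanSpace ℝ (Fin n) => S) (ball x ε) volume :=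
        integrableOn_const measure_ball_lt_top.ne
      have hmono : ∫ y in ball x ε, u₁ y ≤ ∫ y in ball x ε, (u₂ y + S) := by
        refine setIntegral_mono_on hint1 (hint2.add hcstS) measurableSet_ball ?_
        intro y hy
        have := hS_le y (hBsub hy)
        linarith
      have hadd : ∫ y in ball x ε, (u₂ y + S) =
          (∫ y in ball x ε, u₂ y) + (volume (ball x ε)).toReal * S := by
        rw [integral_add hint2 hcstS]
        simp [mul_comm, measureReal_def]
      rw [setAverage_eq, setAverage_eq, smul_eq_mul, smul_eq_mul]
      rw [hadd] at hmono
      have h := mul_le_mul_of_nonneg_left hmono (le_of_lt (inv_pos.mpr hμpos))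
      calc (volume (ball x ε)).toReal⁻¹ * ∫ y in ball x ε, u₁ y
          ≤ (volume (ball x ε)).toReal⁻¹ *
            ((∫ y in ball x ε, u₂ y) + (volume (ball x ε)).toReal * S) := h
        _ = (volume (ball x ε)).toReal⁻¹ * (∫ y in ball x ε, u₂ y) + S := by
            field_simp
    -- combine
    rw [hdpp₁ x hx, hdpp₂ x hx]
    rw [← mul_sub]
    refine mul_le_mul_of_nonneg_left ?_ hc.le
    have hα2 : (0:ℝ) ≤ α / 2 := by linarith [hα.1]
    have hβ0 : (0:ℝ) ≤ β := hβ.1.le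
    have hαS : α * S + β * S = S := by
      have : (α + β) * S = 1 * S := by rw [hαβ]
      linarith [this]
    nlinarith [mul_le_mul_of_nonneg_left hsup hα2, mul_le_mul_of_nonneg_left hinf hα2,
      mul_le_mul_of_nonneg_left havg hβ0, hαS]
  -- boundary estimate
  have hΓle : ∀ x ∈ Γε, u₁ x - u₂ x ≤ 0 := by
    intro x hx
    rw [hbd₁ x hx, hbd₂ x hx]
    linarith [hF x hx]
  -- S ≤ 0
  have hS0 : S ≤ 0 := by
    by_contra h
    push_neg at h
    have hstep : S ≤ (1 - γ * ε ^ 2) * S := by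
      refine csSup_le hne ?_
      rintro a ⟨x, hx, rfl⟩
      cases hx with
      | inl hxΩ => exact hkey x hxΩ
      | inr hxΓ =>
        calc d x ≤ 0 := hΓle x hxΓ
          _ ≤ (1 - γ * ε ^ 2) * S := by positivity
    nlinarith
  intro x hx
  linarith [hS_le x hx, hS0]
end

section
/- (Arzelà–Ascoli variant for discontinuous approximations) Let Ω̄ ⊂ ℝⁿ be compact and let {u_ε : Ω̄ → ℝ}_{ε>0} be a family of (not necessarily continuous) functions such that (a) there is C > 0 with |u_ε(x)| ≤ C for all ε > 0, x ∈ Ω̄, and (b) for every η > 0 there exist r₀ > 0 and ε₀ > 0 such that for all ε < ε₀ and all x, z ∈ Ω̄ with |x − z| < r₀ one has |u_ε(x) − u_ε(z)| < η. Then there exist a uniformly continuous function u : Ω̄ → ℝ and a sequence ε_i → 0 such that u_{ε_i} → u uniformly on Ω̄. -/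
open Set Filter

open Topology

theorem asymptotic_arzela_ascoli {n : ℕ}
    (K : Set (EuclideanSpace ℝ (Fin n))) (hK : IsCompact K)
    (u : ℝ → EuclideanSpace ℝ (Fin n) → ℝ)
    (C : ℝ) (hC : 0 < C)
    (hbdd : ∀ ε > (0 : ℝ), ∀ x ∈ K, |u ε x| ≤ C)
    (heq : ∀ η > (0 : ℝ), ∃ r₀ > (0 : ℝ), ∃ ε₀ > (0 : ℝ),
      ∀ ε, 0 < ε → ε < ε₀ → ∀ x ∈ K, ∀ z ∈ K, ‖x - z‖ < r₀ →
        |u ε x - u ε z| < η) :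
    ∃ ulim : EuclideanSpace ℝ (Fin n) → ℝ,
      UniformContinuousOn ulim K ∧
      ∃ εi : ℕ → ℝ, (∀ i, 0 < εi i) ∧
        Tendsto εi atTop (nhds 0) ∧
        TendstoUniformlyOn (fun i => u (εi i)) ulim atTop K := by
  -- countable dense subset of K
  obtain ⟨D, hDK, hDc, hDd⟩ := EMetric.subset_countable_closure_of_compact hK
  haveI : Countable D := hDc.to_subtype
  have hpos : ∀ i : ℕ, (0 : ℝ) < 1 / (i + 1) := fun i => by positivity
  set w : ℕ → (D → ℝ) := fun i d => u (1 / ((i : ℝ) + 1)) d with hw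
  have hwmem : ∀ i, w i ∈ Set.pi univ (fun _ : D => Icc (-C) C) := by
    intro i d _
    exact mem_Icc.2 (abs_le.1 (hbdd _ (hpos i) d (hDK d.2)))
  have hcomp : IsCompact (Set.pi univ fun _ : D => Icc (-C : ℝ) C) :=
    isCompact_univ_pi fun _ => isCompact_Icc
  obtain ⟨L, -, φ, hφ, hconv⟩ := hcomp.tendsto_subseq hwmem
  set εi : ℕ → ℝ := fun i => 1 / ((φ i : ℝ) + 1) with hεi
  have hεpos : ∀ i, 0 < εi i := fun i => hpos (φ i)
  have hεtend : Tendsto εi atTop (𝓝 0) :=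
    tendsto_one_div_add_atTop_nhds_zero_nat.comp hφ.tendsto_atTop
  have hconvd : ∀ d : D, Tendsto (fun i => u (εi i) (d : EuclideanSpace ℝ (Fin n))) atTop (𝓝 (L d)) := by
    intro d
    exact tendsto_pi_nhds.1 hconv d
  -- uniform Cauchy
  have hcauchy : UniformCauchySeqOn (fun i => u (εi i)) atTop K := by
    rw [Metric.uniformCauchySeqOn_iff]
    intro δ hδ
    obtain ⟨r₀, hr₀, ε₀, hε₀, hmod⟩ := heq (δ / 4) (by linarith)
    have hcover : K ⊆ ⋃ d : D, Metric.ball (d : EuclideanSpace ℝ (Fin n)) r₀ := by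
      intro x hx
      obtain ⟨d, hdD, hd⟩ := Metric.mem_closure_iff.1 (hDd hx) r₀ hr₀
      exact mem_iUnion.2 ⟨⟨d, hdD⟩, Metric.mem_ball.2 hd⟩
    obtain ⟨t, ht⟩ := hK.elim_finite_subcover
      (fun d : D => Metric.ball (d : EuclideanSpace ℝ (Fin n)) r₀)
      (fun d => Metric.isOpen_ball) hcover
    have hev : ∀ᶠ i in atTop, εi i < ε₀ ∧
        ∀ d ∈ t, dist (u (εi i) (d : EuclideanSpace ℝ (Fin n))) (L d) < δ / 4 := by
      have h1 : ∀ᶠ i in atTop, εi i < ε₀ := hεtend.eventually (gt_mem_nhds hε₀)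
      have h2 : ∀ᶠ i in atTop, ∀ d ∈ t,
          dist (u (εi i) (d : EuclideanSpace ℝ (Fin n))) (L d) < δ / 4 :=
        t.eventually_all.2 fun d _ =>
          (hconvd d).eventually (Metric.ball_mem_nhds _ (by linarith : (0:ℝ) < δ / 4))
      filter_upwards [h1, h2] with i hi1 hi2 using ⟨hi1, hi2⟩
    obtain ⟨N, hN⟩ := eventually_atTop.1 hev
    refine ⟨N, fun m hm k hk x hx => ?_⟩
    obtain ⟨d, hdt, hxd⟩ := mem_iUnion₂.1 (ht hx)
    have hdK : (d : EuclideanSpace ℝ (Fin n)) ∈ K := hDK d.2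
    have hxd' : ‖x - (d : EuclideanSpace ℝ (Fin n))‖ < r₀ := by
      rw [← dist_eq_norm]; exact Metric.mem_ball.1 hxd
    have hm' := hN m hm
    have hk' := hN k hk
    have e1 : dist (u (εi m) x) (u (εi m) d) < δ / 4 := by
      rw [Real.dist_eq]
      exact hmod _ (hεpos m) hm'.1 x hx d hdK hxd'
    have e2 : dist (u (εi m) (d : EuclideanSpace ℝ (Fin n))) (L d) < δ / 4 := hm'.2 d hdt
    have e3 : dist (L d) (u (εi k) (d : EuclideanSpace ℝ (Fin n))) < δ / 4 := by
      rw [dist_comm]; exact hk'.2 d hdt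
    have e4 : dist (u (εi k) (d : EuclideanSpace ℝ (Fin n))) (u (εi k) x) < δ / 4 := by
      rw [dist_comm, Real.dist_eq]
      exact hmod _ (hεpos k) hk'.1 x hx d hdK hxd'
    calc dist (u (εi m) x) (u (εi k) x)
        ≤ dist (u (εi m) x) (u (εi m) d) + dist (u (εi m) (d : EuclideanSpace ℝ (Fin n))) (L d)
          + dist (L d) (u (εi k) (d : EuclideanSpace ℝ (Fin n)))
          + dist (u (εi k) (d : EuclideanSpace ℝ (Fin n))) (u (εi k) x) := by
          have := dist_triangle4 (u (εi m) x) (u (εi m) d) (L d) (u (εi k) x)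
          have h' := dist_triangle (L d) (u (εi k) (d : EuclideanSpace ℝ (Fin n))) (u (εi k) x)
          linarith
      _ < δ := by linarith
  -- pointwise Cauchy and limit
  have hpt : ∀ x ∈ K, CauchySeq (fun i => u (εi i) x) := by
    intro x hx
    rw [Metric.cauchySeq_iff]
    intro δ hδ
    obtain ⟨N, hN⟩ := Metric.uniformCauchySeqOn_iff.1 hcauchy δ hδ
    exact ⟨N, fun m hm k hk => hN m hm k hk x hx⟩
  set ulim : EuclideanSpace ℝ (Fin n) → ℝ := fun x => limUnder atTop (fun i => u (εi i) x)
    with hulim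
  have htend : ∀ x ∈ K, Tendsto (fun i => u (εi i) x) atTop (𝓝 (ulim x)) := fun x hx =>
    (hpt x hx).tendsto_limUnder
  have hTU : TendstoUniformlyOn (fun i => u (εi i)) ulim atTop K :=
    hcauchy.tendstoUniformlyOn_of_tendsto htend
  refine ⟨ulim, ?_, εi, hεpos, hεtend, hTU⟩
  rw [Metric.uniformContinuousOn_iff]
  intro η hη
  obtain ⟨r₀, hr₀, ε₀, hε₀, hmod⟩ := heq (η / 2) (by linarith)
  refine ⟨r₀, hr₀, fun x hx z hz hxz => ?_⟩
  have h1 : Tendsto (fun i => dist (u (εi i) x) (u (εi i) z)) atTop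
      (𝓝 (dist (ulim x) (ulim z))) := (htend x hx).dist (htend z hz)
  have h2 : ∀ᶠ i in atTop, dist (u (εi i) x) (u (εi i) z) ≤ η / 2 := by
    filter_upwards [hεtend.eventually (gt_mem_nhds hε₀)] with i hi
    refine le_of_lt ?_
    rw [Real.dist_eq]
    exact hmod _ (hεpos i) hi x hx z hz (by rwa [← dist_eq_norm])
  have := le_of_tendsto h1 h2
  linarith
end
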